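/- Let A ∈ ℝ^{m×n} be any matrix with rows a_1, …, a_m, and let x, x_* ∈ ℝ^n. Then ‖(A_x − A_{x_*})x_*‖² = Σ_{i=1}^m (sgn(⟨a_i,x⟩) − sgn(⟨a_i,x_*⟩))²·⟨a_i,x_*⟩² ≤ Σ_{i=1}^m (sgn(⟨a_i,x⟩) − sgn(⟨a_i,x_*⟩))²·⟨a_i, x − x_*⟩² = ‖A_x(x − x_*)‖² + ‖A_{x_*}(x − x_*)‖² − 2⟨x − x_*, A_xᵀA_{x_*}(x − x_*)⟩. -/

import Mathlib

noncomputable section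
open Matrix MeasureTheory ProbabilityTheory Real

/-- Euclidean norm on `Fin n → ℝ`. -/
def enorm {n : ℕ} (x : Fin n → ℝ) : ℝ := Real.sqrt (∑ i, x i ^ 2)

/-- Euclidean inner product. -/
def dotp {n : ℕ} (x y : Fin n → ℝ) : ℝ := ∑ i, x i * y i

/-- Angle between two vectors. -/
def angle' {n : ℕ} (x y : Fin n → ℝ) : ℝ :=
  Real.arccos (dotp x y / (_root_.enorm x * _root_.enorm y))

/-- Normalization `x̂ = x / ‖x‖`. -/
def unitize {n : ℕ} (x : Fin n → ℝ) : Fin n → ℝ := (_root_.enorm x)⁻¹ • x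

/-- The symmetric matrix `M_{x̂↔ŷ}` sending `x̂ ↦ ŷ`, `ŷ ↦ x̂`, and `z ↦ 0`
for `z ⊥ span{x,y}`. -/
def Mswap {n : ℕ} (x y : Fin n → ℝ) : Matrix (Fin n) (Fin n) ℝ :=
  let u := unitize x
  let v := unitize y
  let c := dotp u v
  if c ^ 2 = 1 then Matrix.vecMulVec u v
  else (1 / (1 - c ^ 2)) • (Matrix.vecMulVec u v + Matrix.vecMulVec v u)
       - (c / (1 - c ^ 2)) • (Matrix.vecMulVec u u + Matrix.vecMulVec v v)

/-- Operator (spectral) norm of a matrix, w.r.t. Euclidean norms. -/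
def opNorm {m n : ℕ} (M : Matrix (Fin m) (Fin n) ℝ) : ℝ :=
  ‖(LinearMap.toContinuousLinearMap (Matrix.toEuclideanLin M))‖

/-- `A_x = diag(sgn(Ax)) A` where `sgn` is applied entrywise. -/
def Asgn {m n : ℕ} (A : Matrix (Fin m) (Fin n) ℝ) (x : Fin n → ℝ) :
    Matrix (Fin m) (Fin n) ℝ :=
  Matrix.diagonal (fun i => Real.sign (A.mulVec x i)) * A

/-- `Φ_{x,y}`. -/
def Phi {n : ℕ} (x y : Fin n → ℝ) : Matrix (Fin n) (Fin n) ℝ :=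
  if x ≠ 0 ∧ y ≠ 0 then
    ((π - 2 * angle' x y) / π) • (1 : Matrix (Fin n) (Fin n) ℝ)
      + (2 * Real.sin (angle' x y) / π) • Mswap x y
  else 0

/-- The Measurement Distribution Condition with constant `ε`. -/
def MDC {m n : ℕ} (A : Matrix (Fin m) (Fin n) ℝ) (ε : ℝ) : Prop :=
  ∀ x y : Fin n → ℝ, opNorm ((Asgn A x)ᵀ * Asgn A y - Phi x y) ≤ ε

/-- `dist(x, x_*) = min(‖x - x_*‖, ‖x + x_*‖)`. -/
def pdist {n : ℕ} (x y : Fin n → ℝ) : ℝ := min (_root_.enorm (x - y)) (_root_.enorm (x + y))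


lemma myAux_enorm_sq {n : ℕ} (v : Fin n → ℝ) : _root_.enorm v ^ 2 = ∑ i, v i ^ 2 := by
  unfold _root_.enorm
  exact Real.sq_sqrt (Finset.sum_nonneg fun i _ => sq_nonneg _)

lemma myAux_Asgn_apply {m n : ℕ} (A : Matrix (Fin m) (Fin n) ℝ) (x v : Fin n → ℝ) (i : Fin m) :
    ((Asgn A x).mulVec v) i = Real.sign (dotp (A i) x) * dotp (A i) v := by
  simp [Asgn, dotp, Matrix.mulVec, Matrix.mul_apply, dotProduct, Matrix.diagonal,
    Finset.mul_sum, mul_assoc]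

lemma myAux_dotp_transpose {m n : ℕ} (M : Matrix (Fin m) (Fin n) ℝ) (u : Fin n → ℝ)
    (w : Fin m → ℝ) : dotp u (Mᵀ.mulVec w) = ∑ i, (M.mulVec u) i * w i := by
  unfold dotp
  simp only [Matrix.mulVec, dotProduct, Matrix.transpose_apply, Finset.mul_sum,
    Finset.sum_mul]
  rw [Finset.sum_comm]
  exact Finset.sum_congr rfl fun i _ => Finset.sum_congr rfl fun j _ => by ring

lemma myAux_dotp_sub {n : ℕ} (a x y : Fin n → ℝ) : dotp a (x - y) = dotp a x - dotp a y := by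
  unfold dotp
  simp [Pi.sub_apply, mul_sub, Finset.sum_sub_distrib]

lemma myAux_sq_le (p q : ℝ) (h : Real.sign p ≠ Real.sign q) : q ^ 2 ≤ (p - q) ^ 2 := by
  rcases lt_trichotomy p 0 with hp | hp | hp <;>
  rcases lt_trichotomy q 0 with hq | hq | hq <;>
  simp_all [Real.sign_of_pos, Real.sign_of_neg, Real.sign_zero] <;> nlinarith

/-- For any matrix `A` with rows `a₁, …, a_m` and any `x, x_*`:
`‖(A_x − A_{x_*})x_*‖² = Σᵢ (sgn⟨aᵢ,x⟩ − sgn⟨aᵢ,x_*⟩)² ⟨aᵢ,x_*⟩²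
  ≤ Σᵢ (sgn⟨aᵢ,x⟩ − sgn⟨aᵢ,x_*⟩)² ⟨aᵢ,x−x_*⟩²
  = ‖A_x(x−x_*)‖² + ‖A_{x_*}(x−x_*)‖² − 2⟨x−x_*, A_xᵀA_{x_*}(x−x_*)⟩`. -/
theorem Asgn_difference_identity {m n : ℕ}
    (A : Matrix (Fin m) (Fin n) ℝ) (x xstar : Fin n → ℝ) :
    _root_.enorm ((Asgn A x - Asgn A xstar).mulVec xstar) ^ 2
      = ∑ i, (Real.sign (dotp (A i) x) - Real.sign (dotp (A i) xstar)) ^ 2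
          * dotp (A i) xstar ^ 2 ∧
    (∑ i, (Real.sign (dotp (A i) x) - Real.sign (dotp (A i) xstar)) ^ 2
        * dotp (A i) xstar ^ 2)
      ≤ ∑ i, (Real.sign (dotp (A i) x) - Real.sign (dotp (A i) xstar)) ^ 2
          * dotp (A i) (x - xstar) ^ 2 ∧
    (∑ i, (Real.sign (dotp (A i) x) - Real.sign (dotp (A i) xstar)) ^ 2
        * dotp (A i) (x - xstar) ^ 2)
      = _root_.enorm ((Asgn A x).mulVec (x - xstar)) ^ 2
        + _root_.enorm ((Asgn A xstar).mulVec (x - xstar)) ^ 2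
        - 2 * dotp (x - xstar) (((Asgn A x)ᵀ * Asgn A xstar).mulVec (x - xstar)) := by
  set s : Fin m → ℝ := fun i => Real.sign (dotp (A i) x) with hs
  set t : Fin m → ℝ := fun i => Real.sign (dotp (A i) xstar) with ht
  have hsx : ∀ v : Fin n → ℝ, ∀ i, ((Asgn A x).mulVec v) i = s i * dotp (A i) v :=
    fun v i => myAux_Asgn_apply A x v i
  have htx : ∀ v : Fin n → ℝ, ∀ i, ((Asgn A xstar).mulVec v) i = t i * dotp (A i) v :=
    fun v i => myAux_Asgn_apply A xstar v i
  refine ⟨?_, ?_, ?_⟩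
  · rw [myAux_enorm_sq]
    refine Finset.sum_congr rfl fun i _ => ?_
    have : ((Asgn A x - Asgn A xstar).mulVec xstar) i
        = (s i - t i) * dotp (A i) xstar := by
      rw [Matrix.sub_mulVec]
      simp only [Pi.sub_apply, hsx, htx]
      ring
    rw [this]; ring
  · refine Finset.sum_le_sum fun i _ => ?_
    by_cases h : s i = t i
    · have h' : Real.sign (dotp (A i) x) = Real.sign (dotp (A i) xstar) := h
      rw [h', sub_self]
      simp
    · have h2 : dotp (A i) xstar ^ 2 ≤ dotp (A i) (x - xstar) ^ 2 := by
        rw [myAux_dotp_sub]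
        exact myAux_sq_le _ _ h
      exact mul_le_mul_of_nonneg_left h2 (sq_nonneg _)
  · have hcross : dotp (x - xstar) (((Asgn A x)ᵀ * Asgn A xstar).mulVec (x - xstar))
        = ∑ i, (s i * dotp (A i) (x - xstar)) * (t i * dotp (A i) (x - xstar)) := by
      rw [← Matrix.mulVec_mulVec, myAux_dotp_transpose]
      exact Finset.sum_congr rfl fun i _ => by rw [hsx, htx]
    rw [myAux_enorm_sq, myAux_enorm_sq, hcross]
    rw [← Finset.sum_add_distrib, Finset.mul_sum, ← Finset.sum_sub_distrib]
    refine Finset.sum_congr rfl fun i _ => ?_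
    rw [hsx, htx]
    ring
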